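/- arXiv:2208.14794 — 5 statements merged into one kernel-verified Lean document; each statement's English description precedes it below -/
import Mathlib

section
/- For all natural numbers n and m with 2 ≤ n ≤ m+2, the following identity of rational numbers holds: ∑_{k=0}^{n−1} (−1)^k · (n−k) / (k!·(m+2−k)!) = (−1)^{n−1} · (∏_{j=0}^{n−2} (m−j)) / ((n−1)!·(m+2)!). -/
/-!
After multiplying by `(m + 2)!` the claim reads
`∑_{k<n} (-1)^k (n - k) C(m+2, k) = (-1)^(n-1) C(m, n-1)`.
The left side is the sum of the first `n` partial sums of the alternating row
`(-1)^k C(m+2, k)`, and a partial alternating sum of row `N + 1` of Pascal's triangle is a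
signed entry of row `N`; applying this twice gives the right side.
-/

open Finset Nat

theorem Finset.sum_range_sum_range_succ {M : Type*} [AddCommMonoid M] (f : ℕ → M) (n : ℕ) :
    ∑ i ∈ range n, ∑ k ∈ range (i + 1), f k = ∑ k ∈ range n, (n - k) • f k := by
  induction n with
  | zero => simp
  | succ n ih =>
    have hweights : ∀ k ∈ range (n + 1), (n + 1 - k) • f k = (n - k) • f k + f k := by
      intro k hk
      rw [← succ_nsmul, Nat.sub_add_comm (mem_range_succ_iff.mp hk)]
    rw [sum_range_succ, ih, sum_congr rfl hweights, sum_add_distrib,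
      sum_range_succ (fun k => (n - k) • f k), Nat.sub_self, zero_nsmul, add_zero]

theorem Int.sum_range_succ_mul_alternating_choose (N j : ℕ) :
    ∑ k ∈ Finset.range (j + 1), ((j + 1 - k : ℕ) : ℤ) * ((-1) ^ k * (N + 2).choose k) =
      (-1) ^ j * N.choose j := by
  simp_rw [← nsmul_eq_mul, ← sum_range_sum_range_succ, Int.alternating_sum_range_choose_eq_choose]

theorem Nat.inv_factorial_mul_factorial_sub {N k : ℕ} (hk : k ≤ N) :
    ((k ! : ℚ) * ((N - k)! : ℚ))⁻¹ = (N.choose k : ℚ) / N ! := by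
  rw [Nat.cast_choose ℚ hk]
  field_simp

/-- The constant `c_{n,m}` of Proposition 3.2 of the paper (up to the factor `2πi`):
for `2 ≤ n ≤ m + 2`,
`∑_{k=0}^{n−1} (−1)^k (n−k)/(k!(m+2−k)!) = (−1)^{n−1} ∏_{j=0}^{n−2}(m−j) / ((n−1)!(m+2)!)`
in `ℚ`. -/
theorem sum_alt_weighted_inv_factorial_eq (n m : ℕ) (hn : 2 ≤ n) (hnm : n ≤ m + 2) :
    ∑ k ∈ Finset.range n,
        (-1 : ℚ) ^ k * ((n - k : ℕ) : ℚ) /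
          ((Nat.factorial k : ℚ) * (Nat.factorial (m + 2 - k) : ℚ)) =
      (-1 : ℚ) ^ (n - 1) * (∏ j ∈ Finset.range (n - 1), ((m - j : ℕ) : ℚ)) /
        ((Nat.factorial (n - 1) : ℚ) * (Nat.factorial (m + 2) : ℚ)) := by
  obtain ⟨j, rfl⟩ : ∃ j, n = j + 1 := ⟨n - 1, by omega⟩
  have hterm : ∀ k ∈ range (j + 1), (-1 : ℚ) ^ k * ((j + 1 - k : ℕ) : ℚ) / (k ! * (m + 2 - k)!) =
      (((j + 1 - k : ℕ) : ℤ) * ((-1) ^ k * (m + 2).choose k) : ℤ) / (m + 2)! := by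
    intro k hk
    rw [div_eq_mul_inv, inv_factorial_mul_factorial_sub (by grind)]
    push_cast
    ring
  have hprod : ∏ i ∈ range j, ((m - i : ℕ) : ℚ) = j ! * m.choose j := by
    rw [← Nat.cast_prod, ← descFactorial_eq_prod_range, descFactorial_eq_factorial_mul_choose]
    push_cast
    rfl
  rw [sum_congr rfl hterm, ← sum_div, ← Int.cast_sum, Int.sum_range_succ_mul_alternating_choose,
    Nat.add_sub_cancel, hprod]
  push_cast
  field_simp
end

section
/- Let g be a natural number, let (a_{ij})_{1≤i,j≤g} be complex numbers with a_{ij} = a_{ji} for all i, j, let f_1, …, f_g ∈ ℂ[[X]] be formal power series, and set S_{h,k} := ∑_{i,j=1}^g a_{ij}·(D^h f_i)·(D^k f_j) ∈ ℂ[[X]]. Let m be an even natural number. If S_{h,k} = 0 for all natural numbers h, k with h + k ≤ m, then S_{h,k} = 0 for all natural numbers h, k with h + k ≤ m + 1. -/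
open PowerSeries

/-- Parity upgrade (equation (2.4) of the paper): for a symmetric coefficient matrix
`a` and power series `f₁, …, f_g`, with
`S h k = ∑ aᵢⱼ (D^h fᵢ)(D^k fⱼ)`, if `m` is even and `S h k = 0` for all `h + k ≤ m`,
then `S h k = 0` for all `h + k ≤ m + 1`. -/
theorem sum_deriv_vanish_succ_of_even (g : ℕ) (a : Fin g → Fin g → ℂ)
    (hsymm : ∀ i j, a i j = a j i) (f : Fin g → PowerSeries ℂ) (m : ℕ) (hm : Even m)
    (S : ℕ → ℕ → PowerSeries ℂ)
    (hS : ∀ h k : ℕ, S h k =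
      ∑ i, ∑ j, a i j •
        ((⇑(PowerSeries.derivative ℂ))^[h] (f i) * (⇑(PowerSeries.derivative ℂ))^[k] (f j)))
    (hvan : ∀ h k : ℕ, h + k ≤ m → S h k = 0) :
    ∀ h k : ℕ, h + k ≤ m + 1 → S h k = 0 := by
  set D := PowerSeries.derivative ℂ with hD
  -- symmetry of S
  have hSsymm : ∀ h k : ℕ, S k h = S h k := by
    intro h k
    rw [hS, hS, Finset.sum_comm]
    refine Finset.sum_congr rfl fun i _ => Finset.sum_congr rfl fun j _ => ?_
    rw [hsymm j i, mul_comm]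
  -- derivative relation
  have hder : ∀ h k : ℕ, D (S h k) = S (h + 1) k + S h (k + 1) := by
    intro h k
    rw [hS h k, hS (h+1) k, hS h (k+1), ← Finset.sum_add_distrib]
    rw [map_sum]
    refine Finset.sum_congr rfl fun i _ => ?_
    rw [← Finset.sum_add_distrib, map_sum]
    refine Finset.sum_congr rfl fun j _ => ?_
    rw [Derivation.map_smul, Derivation.leibniz, ← smul_add]
    congr 1
    rw [Function.iterate_succ_apply' (⇑D) h, Function.iterate_succ_apply' (⇑D) k]
    simp only [smul_eq_mul]
    ring
  -- alternating relation along the antidiagonal h + k = m + 1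
  have key : ∀ j : ℕ, j ≤ m + 1 → S (m + 1 - j) j = (-1 : ℂ) ^ j • S (m + 1) 0 := by
    intro j
    induction j with
    | zero => intro _; simp
    | succ j ih =>
      intro hj
      have hjm : j ≤ m := Nat.lt_succ_iff.mp hj
      have h0 : S (m - j) j = 0 := hvan _ _ (by omega)
      have := hder (m - j) j
      rw [h0, map_zero] at this
      have hrw : m - j + 1 = m + 1 - j := by omega
      have hrw2 : m + 1 - (j + 1) = m - j := by omega
      have : S (m + 1 - j) j + S (m - j) (j + 1) = 0 := by rw [← hrw]; exact this.symm
      have hval : S (m - j) (j + 1) = -S (m + 1 - j) j :=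
        eq_neg_of_add_eq_zero_right this
      rw [hrw2, hval, ih (by omega), pow_succ]
      rw [mul_smul, neg_one_smul, smul_neg]
  -- conclude S (m+1) 0 = 0 using symmetry and odd parity of m+1
  have h0 : S (m + 1) 0 = 0 := by
    have h1 := key (m + 1) le_rfl
    rw [Nat.sub_self] at h1
    have h2 : S 0 (m + 1) = S (m + 1) 0 := hSsymm (m + 1) 0
    have hpow : ((-1 : ℂ)) ^ (m + 1) = -1 := by
      rw [pow_succ, hm.neg_one_pow]; ring
    rw [h2, hpow, neg_one_smul] at h1
    have h3 : (2 : ℂ) • S (m + 1) 0 = 0 := by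
      rw [two_smul]
      nth_rewrite 1 [h1]
      ring
    rcases smul_eq_zero.mp h3 with h | h
    · exact absurd h two_ne_zero
    · exact h
  intro h k hhk
  rcases Nat.lt_or_ge (h + k) (m + 1) with hlt | hge
  · exact hvan h k (Nat.lt_succ_iff.mp hlt)
  · have heq : h + k = m + 1 := le_antisymm hhk hge
    have hk : k ≤ m + 1 := by omega
    have : m + 1 - k = h := by omega
    have := key k hk
    rw [‹m + 1 - k = h›] at this
    rw [this, h0, smul_zero]
end

section
/- Let g be a natural number, let (a_{ij})_{1≤i,j≤g} be complex numbers, let f_1, …, f_g ∈ ℂ[[X]] be formal power series, and set S_{h,k} := ∑_{i,j=1}^g a_{ij}·(D^h f_i)·(D^k f_j) ∈ ℂ[[X]]. For every natural number m, the following are equivalent: (i) S_{0,k} = 0 for all k ≤ m+1; (ii) S_{h,k} = 0 for all natural numbers h, k with h + k ≤ m+1. -/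
open PowerSeries

/-- Equation (2.4) of the paper: with `S h k = ∑ aᵢⱼ (D^h fᵢ)(D^k fⱼ)` in `ℂ⟦X⟧`,
the vanishing of `S 0 k` for all `k ≤ m + 1` is equivalent to the vanishing of
`S h k` for all `h + k ≤ m + 1`. -/
theorem sum_deriv_vanish_iff (g : ℕ) (a : Fin g → Fin g → ℂ)
    (f : Fin g → PowerSeries ℂ) (S : ℕ → ℕ → PowerSeries ℂ)
    (hS : ∀ h k : ℕ, S h k =
      ∑ i, ∑ j, a i j •
        ((⇑(PowerSeries.derivative ℂ))^[h] (f i) * (⇑(PowerSeries.derivative ℂ))^[k] (f j)))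
    (m : ℕ) :
    (∀ k : ℕ, k ≤ m + 1 → S 0 k = 0) ↔ (∀ h k : ℕ, h + k ≤ m + 1 → S h k = 0) := by
  have key : ∀ p q : ℕ, (derivative ℂ) (S p q) = S (p + 1) q + S p (q + 1) := by
    intro p q
    simp only [hS, map_sum]
    rw [← Finset.sum_add_distrib]
    refine Finset.sum_congr rfl fun i _ => ?_
    rw [← Finset.sum_add_distrib]
    refine Finset.sum_congr rfl fun j _ => ?_
    rw [Derivation.map_smul, Derivation.leibniz, Function.iterate_succ_apply',
      Function.iterate_succ_apply']
    simp only [smul_eq_mul, smul_add]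
    rw [add_comm]
    ring_nf
  constructor
  · intro h0 h k hk
    induction h generalizing k with
    | zero => exact h0 k (by omega)
    | succ n ih =>
      have h1 : S n (k + 1) = 0 := ih (k + 1) (by omega)
      have h2 : (derivative ℂ) (S n k) = 0 := by rw [ih k (by omega)]; simp
      rw [key n k, h1, add_zero] at h2
      exact h2
  · intro hall k hk
    exact hall 0 k (by omega)
end

section
/- Let g be a natural number, let (a_{ij})_{1≤i,j≤g} be complex numbers, let f_1, …, f_g ∈ ℂ[[X]] be formal power series, and set S_{h,k} := ∑_{i,j=1}^g a_{ij}·(D^h f_i)·(D^k f_j) ∈ ℂ[[X]]. Let m be a natural number and suppose S_{h,k} = 0 for all natural numbers h, k with h + k ≤ m. Then for every natural number k ≤ m+1 one has S_{m+1−k, k} = (−1)^k · S_{m+1, 0} in ℂ[[X]]. -/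
open PowerSeries

/-- Equation (2.5) of the paper: with `S h k = ∑ aᵢⱼ (D^h fᵢ)(D^k fⱼ)` in `ℂ⟦X⟧`,
if `S h k = 0` whenever `h + k ≤ m` then `S (m+1−k) k = (−1)^k S (m+1) 0`
for all `k ≤ m + 1`. -/
theorem sum_deriv_alternating (g : ℕ) (a : Fin g → Fin g → ℂ)
    (f : Fin g → PowerSeries ℂ) (S : ℕ → ℕ → PowerSeries ℂ)
    (hS : ∀ h k : ℕ, S h k =
      ∑ i, ∑ j, a i j •
        ((⇑(PowerSeries.derivative ℂ))^[h] (f i) * (⇑(PowerSeries.derivative ℂ))^[k] (f j)))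
    (m : ℕ) (hvan : ∀ h k : ℕ, h + k ≤ m → S h k = 0) :
    ∀ k : ℕ, k ≤ m + 1 → S (m + 1 - k) k = ((-1 : ℂ) ^ k) • S (m + 1) 0 := by
  have key : ∀ h k : ℕ, PowerSeries.derivative ℂ (S h k) = S (h+1) k + S h (k+1) := by
    intro h k
    rw [hS h k, hS (h+1) k, hS h (k+1), map_sum]
    rw [← Finset.sum_add_distrib]
    refine Finset.sum_congr rfl fun i _ => ?_
    rw [map_sum, ← Finset.sum_add_distrib]
    refine Finset.sum_congr rfl fun j _ => ?_
    rw [← smul_add, Derivation.map_smul]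
    congr 1
    rw [Derivation.leibniz, Function.iterate_succ_apply' (⇑(PowerSeries.derivative ℂ)) h,
      Function.iterate_succ_apply' (⇑(PowerSeries.derivative ℂ)) k]
    simp [smul_eq_mul]
    ring
  intro k
  induction k with
  | zero => intro _; simp
  | succ k ih =>
    intro hk
    have hk' : k ≤ m := Nat.lt_succ_iff.mp hk
    have h0 : S (m - k) k = 0 := hvan _ _ (by omega)
    have hd := key (m - k) k
    rw [h0, map_zero] at hd
    have h1 : m - k + 1 = m + 1 - k := by omega
    have h2 : m - k = m + 1 - (k + 1) := by omega
    rw [h1, h2] at hd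
    have := ih (by omega)
    have : S (m + 1 - (k+1)) (k+1) = - S (m + 1 - k) k :=
      eq_neg_of_add_eq_zero_right hd.symm
    rw [this, ih (by omega), pow_succ]
    simp [smul_smul, mul_comm]
end

section
/- Let g be a natural number, let (a_{ij})_{1≤i,j≤g} be complex numbers, let f_1, …, f_g ∈ ℂ[[X]] be formal power series, and set S_{h,k} := ∑_{i,j=1}^g a_{ij}·(D^h f_i)·(D^k f_j) ∈ ℂ[[X]]. Let m be a natural number and suppose S_{h,k} = 0 for all natural numbers h, k with h + k ≤ m+1. Then for every natural number n with 1 ≤ n ≤ m+2 one has the identity in ℂ[[X]]: ∑_{k=0}^{n−1} ((n−k) / (k!·(m+2−k)!)) · S_{m+2−k, k} = ((−1)^{n−1} · ∏_{j=0}^{n−2} (m−j) / ((n−1)!·(m+2)!)) · S_{m+2, 0}, where the rational coefficients are regarded as complex scalars and the product over the empty range (n = 1) equals 1. -/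
open PowerSeries

lemma alt_sum_choose (m : ℕ) : ∀ n : ℕ,
    ∑ k ∈ Finset.range (n+1), (-1:ℤ)^k * (Nat.choose (m+2) k) = (-1)^n * Nat.choose (m+1) n := by
  intro n
  induction n with
  | zero => simp
  | succ n ih =>
    rw [Finset.sum_range_succ, ih, Nat.choose_succ_succ (m+1) n]
    push_cast
    ring

lemma key_sum_choose (m : ℕ) : ∀ n : ℕ,
    ∑ k ∈ Finset.range (n+1), (-1:ℤ)^k * ((n+1-k : ℕ)) * Nat.choose (m+2) k
      = (-1)^n * Nat.choose m n := by
  intro n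
  induction n with
  | zero => simp
  | succ n ih =>
    have h1 : ∑ k ∈ Finset.range (n+2), (-1:ℤ)^k * ((n+2-k : ℕ)) * Nat.choose (m+2) k
        = (∑ k ∈ Finset.range (n+2), (-1:ℤ)^k * ((n+1-k : ℕ)) * Nat.choose (m+2) k)
          + ∑ k ∈ Finset.range (n+2), (-1:ℤ)^k * Nat.choose (m+2) k := by
      rw [← Finset.sum_add_distrib]
      refine Finset.sum_congr rfl fun k hk => ?_
      have hk' : k ≤ n+1 := Nat.lt_succ_iff.mp (Finset.mem_range.mp hk)
      have e : (n+2-k : ℕ) = (n+1-k) + 1 := by omega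
      rw [e]
      push_cast
      ring
    rw [h1, Finset.sum_range_succ (fun k => (-1:ℤ)^k * ((n+1-k : ℕ)) * Nat.choose (m+2) k), ih,
      alt_sum_choose m (n+1), Nat.choose_succ_succ m n]
    simp
    ring

lemma scalar_mainprop (m N : ℕ) (hN : N ≤ m + 1) :
    ∑ k ∈ Finset.range (N+1),
        (((N+1-k : ℕ) : ℂ) / ((Nat.factorial k : ℂ) * (Nat.factorial (m + 2 - k) : ℂ)))
          * (-1:ℂ)^k
      = (-1 : ℂ) ^ N * (∏ j ∈ Finset.range N, ((m - j : ℕ) : ℂ)) /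
          ((Nat.factorial N : ℂ) * (Nat.factorial (m + 2) : ℂ)) := by
  have hfac : (Nat.factorial (m+2) : ℂ) ≠ 0 := Nat.cast_ne_zero.mpr (Nat.factorial_ne_zero _)
  have hfacN : (Nat.factorial N : ℂ) ≠ 0 := Nat.cast_ne_zero.mpr (Nat.factorial_ne_zero _)
  have hterm : ∀ k ∈ Finset.range (N+1),
      (((N+1-k : ℕ) : ℂ) / ((Nat.factorial k : ℂ) * (Nat.factorial (m + 2 - k) : ℂ)))
          * (-1:ℂ)^k
        = ((-1:ℤ)^k * ((N+1-k : ℕ)) * Nat.choose (m+2) k : ℤ) / (Nat.factorial (m+2) : ℂ) := by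
    intro k hk
    have hk' : k ≤ m + 2 := by
      have := Finset.mem_range.mp hk; omega
    have hc : (Nat.choose (m+2) k * Nat.factorial k * Nat.factorial (m+2-k) : ℕ)
        = Nat.factorial (m+2) := Nat.choose_mul_factorial_mul_factorial hk'
    have hk1 : (Nat.factorial k : ℂ) ≠ 0 := Nat.cast_ne_zero.mpr (Nat.factorial_ne_zero _)
    have hk2 : (Nat.factorial (m+2-k) : ℂ) ≠ 0 := Nat.cast_ne_zero.mpr (Nat.factorial_ne_zero _)
    have hc' : (Nat.choose (m+2) k : ℂ) * (Nat.factorial k : ℂ) * (Nat.factorial (m+2-k) : ℂ)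
        = (Nat.factorial (m+2) : ℂ) := by exact_mod_cast congrArg (Nat.cast : ℕ → ℂ) hc
    rw [div_mul_eq_mul_div, div_eq_div_iff (by exact mul_ne_zero hk1 hk2) hfac]
    push_cast
    linear_combination (-((N+1-k : ℕ) : ℂ) * (-1:ℂ)^k) * hc'
  rw [Finset.sum_congr rfl hterm, ← Finset.sum_div, ← Int.cast_sum, key_sum_choose m N]
  have hprod : (∏ j ∈ Finset.range N, ((m - j : ℕ) : ℂ)) = (Nat.descFactorial m N : ℂ) := by
    rw [Nat.descFactorial_eq_prod_range]
    push_cast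
    rfl
  rw [hprod, Nat.descFactorial_eq_factorial_mul_choose]
  push_cast
  field_simp

/-- Algebraic core of Proposition 3.2 (mainprop) of the paper: with
`S h k = ∑ aᵢⱼ (D^h fᵢ)(D^k fⱼ)` in `ℂ⟦X⟧`, if `S h k = 0` whenever `h + k ≤ m + 1`,
then for `1 ≤ n ≤ m + 2`,
`∑_{k=0}^{n−1} ((n−k)/(k!(m+2−k)!)) • S (m+2−k) k
  = ((−1)^{n−1} ∏_{j=0}^{n−2}(m−j) / ((n−1)!(m+2)!)) • S (m+2) 0`. -/
theorem sum_deriv_mainprop (g : ℕ) (a : Fin g → Fin g → ℂ)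
    (f : Fin g → PowerSeries ℂ) (S : ℕ → ℕ → PowerSeries ℂ)
    (hS : ∀ h k : ℕ, S h k =
      ∑ i, ∑ j, a i j •
        ((⇑(PowerSeries.derivative ℂ))^[h] (f i) * (⇑(PowerSeries.derivative ℂ))^[k] (f j)))
    (m : ℕ) (hvan : ∀ h k : ℕ, h + k ≤ m + 1 → S h k = 0)
    (n : ℕ) (hn1 : 1 ≤ n) (hn2 : n ≤ m + 2) :
    ∑ k ∈ Finset.range n,
        (((n - k : ℕ) : ℂ) /
            ((Nat.factorial k : ℂ) * (Nat.factorial (m + 2 - k) : ℂ))) • S (m + 2 - k) k =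
      ((-1 : ℂ) ^ (n - 1) * (∏ j ∈ Finset.range (n - 1), ((m - j : ℕ) : ℂ)) /
          ((Nat.factorial (n - 1) : ℂ) * (Nat.factorial (m + 2) : ℂ))) • S (m + 2) 0 := by
  have hder : ∀ h k : ℕ,
      (PowerSeries.derivative ℂ) (S h k) = S (h+1) k + S h (k+1) := by
    intro h k
    rw [hS h k, hS (h+1) k, hS h (k+1), map_sum, ← Finset.sum_add_distrib]
    refine Finset.sum_congr rfl fun i _ => ?_
    rw [map_sum, ← Finset.sum_add_distrib]
    refine Finset.sum_congr rfl fun j _ => ?_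
    rw [Derivation.map_smul, ← smul_add, Derivation.leibniz, smul_eq_mul, smul_eq_mul,
      Function.iterate_succ_apply', Function.iterate_succ_apply']
    congr 1
    ring
  have hkey : ∀ k, k ≤ m + 2 → S (m+2-k) k = ((-1:ℂ)^k) • S (m+2) 0 := by
    intro k hk
    induction k with
    | zero => simp
    | succ k ih =>
      have hk' : k ≤ m + 1 := by omega
      have h0 : S (m+1-k) k = 0 := hvan _ _ (by omega)
      have hd := hder (m+1-k) k
      rw [h0, map_zero] at hd
      have e1 : m+1-k+1 = m+2-k := by omega
      have e2 : m+1-k = m+2-(k+1) := by omega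
      rw [e1, e2] at hd
      have hneg : S (m+2-(k+1)) (k+1) = - S (m+2-k) k := by
        linear_combination -hd
      rw [hneg, ih (by omega), pow_succ]
      rw [mul_smul]
      simp
  obtain ⟨N, rfl⟩ : ∃ N, n = N + 1 := ⟨n - 1, by omega⟩
  have hN : N ≤ m + 1 := by omega
  have hLHS : ∑ k ∈ Finset.range (N+1),
      (((N+1 - k : ℕ) : ℂ) /
          ((Nat.factorial k : ℂ) * (Nat.factorial (m + 2 - k) : ℂ))) • S (m + 2 - k) k
      = (∑ k ∈ Finset.range (N+1),
          (((N+1-k : ℕ) : ℂ) / ((Nat.factorial k : ℂ) * (Nat.factorial (m + 2 - k) : ℂ)))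
            * (-1:ℂ)^k) • S (m+2) 0 := by
    rw [Finset.sum_smul]
    refine Finset.sum_congr rfl fun k hk => ?_
    have hk' : k ≤ m + 2 := by
      have := Finset.mem_range.mp hk; omega
    rw [hkey k hk', smul_smul]
  rw [hLHS, scalar_mainprop m N hN]
  simp
end
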